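/- arXiv:1105.4504 — 2 statements merged into one kernel-verified Lean document; each statement's English description precedes it below -/
import Mathlib

section
/- Lemma A (Remez-type growth estimate for polynomials): Fix d ≥ 1. There is a constant c(d) depending only on d such that for every real polynomial q of degree ≤ d−1 and all bounded intervals J ⊆ I ⊆ ℝ with |J| > 0, one has sup_{x∈I}|q(x)| ≤ c(d)·(|I|/|J|)^{d−1}·sup_{x∈J}|q(x)|. -/
open Set

noncomputable section

namespace PolyCarleson

/-- **Lemma A (Remez-type growth estimate).** For `d ≥ 1` there is `c(d) > 0` such that
for every real polynomial `q` of degree `≤ d−1` and all bounded intervals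
`J = [u,v] ⊆ I = [A,B]` with `|J| > 0`,
`sup_{x∈I}|q(x)| ≤ c(d)·(|I|/|J|)^{d−1}·sup_{x∈J}|q(x)|`. -/
theorem lemmaA (d : ℕ) (hd : 1 ≤ d) :
    ∃ c : ℝ, 0 < c ∧
      ∀ q : Polynomial ℝ, q.natDegree ≤ d - 1 →
        ∀ A B u v : ℝ, A ≤ u → v ≤ B → u < v →
          (⨆ x : Icc A B, |Polynomial.eval (x : ℝ) q|) ≤
            c * ((B - A) / (v - u)) ^ (d - 1) *
              ⨆ x : Icc u v, |Polynomial.eval (x : ℝ) q| := by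
  set n := d - 1 with hn
  have hnn : (0 : ℝ) < (n : ℝ) ^ n := by
    rcases Nat.eq_zero_or_pos n with h | h
    · simp [h]
    · exact pow_pos (by exact_mod_cast h) n
  refine ⟨(n + 1) * (n : ℝ) ^ n, by positivity, ?_⟩
  intro q hq A B u v hAu hvB huv
  -- setup
  have hAB : A ≤ B := le_trans hAu (le_trans huv.le hvB)
  have hvu : (0 : ℝ) < v - u := by linarith
  have hBA : (0 : ℝ) < B - A + (v - u) - (v - u) → True := fun _ => trivial
  set R : ℝ := (B - A) / (v - u) with hR
  have hR1 : (1 : ℝ) ≤ R := by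
    rw [hR, le_div_iff₀ hvu]; linarith
  have hR0 : (0 : ℝ) ≤ R := le_trans zero_le_one hR1
  -- sup over J
  set M : ℝ := ⨆ x : Icc u v, |Polynomial.eval (x : ℝ) q| with hM
  have huv' : u ≤ v := huv.le
  haveI : Nonempty (Icc u v) := ⟨⟨u, le_refl u, huv'⟩⟩
  haveI : Nonempty (Icc A B) := ⟨⟨A, le_refl A, hAB⟩⟩
  have hcont : Continuous fun t : ℝ => |Polynomial.eval t q| :=
    (Polynomial.continuous q).abs
  have hbdd : BddAbove (Set.range fun t : Icc u v => |Polynomial.eval (t : ℝ) q|) := by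
    obtain ⟨C, hC⟩ := (isCompact_Icc.image hcont).bddAbove
    exact ⟨C, by rintro _ ⟨t, rfl⟩; exact hC ⟨(t : ℝ), t.2, rfl⟩⟩
  have hMle : ∀ t : ℝ, t ∈ Icc u v → |Polynomial.eval t q| ≤ M := by
    intro t ht
    exact le_ciSup hbdd (⟨t, ht⟩ : Icc u v)
  have hM0 : 0 ≤ M := le_trans (abs_nonneg _) (hMle u ⟨le_refl u, huv'⟩)
  -- interpolation nodes
  set s : ℝ := (v - u) / n with hs
  set x : Fin (n + 1) → ℝ := fun i => u + (i : ℕ) * s with hx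
  have hxmem : ∀ i : Fin (n + 1), x i ∈ Icc u v := by
    intro i
    rcases Nat.eq_zero_or_pos n with h0 | hpos
    · have : (i : ℕ) = 0 := by omega
      simp [hx, this, huv']
    · have hs0 : 0 ≤ s := by positivity
      constructor
      · simp [hx]; positivity
      · have hi : ((i : ℕ) : ℝ) ≤ (n : ℝ) := by
          exact_mod_cast Nat.lt_succ_iff.mp i.2
        have : ((i : ℕ) : ℝ) * s ≤ (n : ℝ) * s :=
          mul_le_mul_of_nonneg_right hi hs0
        have hns : (n : ℝ) * s = v - u := by
          rw [hs]; field_simp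
        simp only [hx]; nlinarith
  have hdist : ∀ i j : Fin (n + 1), i ≠ j → s ≤ |x i - x j| := by
    intro i j hij
    have hpos : 0 < n := by
      by_contra h
      push_neg at h
      apply hij
      have : n = 0 := by omega
      apply Fin.ext; omega
    have hs0 : 0 < s := by
      apply div_pos hvu; exact_mod_cast hpos
    have h1 : (1 : ℝ) ≤ |((i : ℕ) : ℝ) - ((j : ℕ) : ℝ)| := by
      have hij' : (i : ℕ) ≠ (j : ℕ) := fun h => hij (Fin.ext h)
      have : ((i : ℕ) : ℤ) ≠ ((j : ℕ) : ℤ) := by exact_mod_cast hij'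
      have h2 : (1 : ℤ) ≤ |((i : ℕ) : ℤ) - ((j : ℕ) : ℤ)| :=
        Int.one_le_abs (sub_ne_zero.mpr this)
      calc (1 : ℝ) ≤ (|((i : ℕ) : ℤ) - ((j : ℕ) : ℤ)| : ℤ) := by exact_mod_cast h2
        _ = |((i : ℕ) : ℝ) - ((j : ℕ) : ℝ)| := by push_cast [Int.cast_abs]; ring_nf
    have : x i - x j = (((i : ℕ) : ℝ) - ((j : ℕ) : ℝ)) * s := by
      simp only [hx]; ring
    rw [this, abs_mul, abs_of_pos hs0]
    nlinarith
  have hinj : Set.InjOn x (Finset.univ : Finset (Fin (n + 1))) := by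
    intro i _ j _ h
    by_contra hij
    have := hdist i j hij
    rw [h, sub_self, abs_zero] at this
    have hpos : 0 < n := by
      by_contra hc
      push_neg at hc
      exact hij (Fin.ext (by omega))
    have : 0 < s := div_pos hvu (by exact_mod_cast hpos)
    linarith [hdist i j hij, (by rw [h, sub_self, abs_zero] : |x i - x j| = 0)]
  -- q equals its interpolation
  have hdeg : q.degree < (Finset.univ : Finset (Fin (n + 1))).card := by
    rw [Finset.card_univ, Fintype.card_fin]
    calc q.degree ≤ (q.natDegree : WithBot ℕ) := Polynomial.degree_le_natDegree
      _ < ((n + 1 : ℕ) : WithBot ℕ) := by exact_mod_cast Nat.lt_succ_of_le hq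
  have hqeq := Lagrange.eq_interpolate hinj hdeg
  -- pointwise bound on I
  have key : ∀ z : ℝ, z ∈ Icc A B →
      |Polynomial.eval z q| ≤ (n + 1) * (n : ℝ) ^ n * R ^ n * M := by
    intro z hz
    have hbasis : ∀ i : Fin (n + 1),
        |Polynomial.eval z (Lagrange.basis Finset.univ x i)| ≤ ((n : ℝ) * R) ^ n := by
      intro i
      rw [Lagrange.basis, Polynomial.eval_prod]
      rw [Finset.abs_prod]
      have hcard : ((Finset.univ : Finset (Fin (n + 1))).erase i).card = n := by
        rw [Finset.card_erase_of_mem (Finset.mem_univ i), Finset.card_univ,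
          Fintype.card_fin]
        omega
      have hfac : ∀ j ∈ (Finset.univ : Finset (Fin (n + 1))).erase i,
          |Polynomial.eval z (Lagrange.basisDivisor (x i) (x j))| ≤ (n : ℝ) * R := ?_
      · calc ∏ j ∈ (Finset.univ : Finset (Fin (n + 1))).erase i,
              |Polynomial.eval z (Lagrange.basisDivisor (x i) (x j))|
            ≤ ∏ _j ∈ (Finset.univ : Finset (Fin (n + 1))).erase i, ((n : ℝ) * R) :=
              Finset.prod_le_prod (fun j _ => abs_nonneg _) hfac
          _ = ((n : ℝ) * R) ^ n := by rw [Finset.prod_const, hcard]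
      intro j hj
      have hji : j ≠ i := (Finset.mem_erase.mp hj).1
      have hpos : 0 < n := by
        by_contra hc
        push_neg at hc
        exact hji (Fin.ext (by omega))
      have hn0 : (0 : ℝ) < n := by exact_mod_cast hpos
      have hs0 : 0 < s := div_pos hvu hn0
      have hij : i ≠ j := fun h => hji h.symm
      have hd := hdist i j hij
      rw [Lagrange.basisDivisor]
      rw [Polynomial.eval_mul, Polynomial.eval_C, Polynomial.eval_sub,
        Polynomial.eval_X, Polynomial.eval_C, abs_mul, abs_inv]
      have hzx : |z - x j| ≤ B - A := by
        have h1 := hxmem j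
        rcases hz with ⟨hz1, hz2⟩
        rcases h1 with ⟨h11, h12⟩
        rw [abs_le]; constructor <;> nlinarith
      have hxx : 0 < |x i - x j| := lt_of_lt_of_le hs0 hd
      calc |x i - x j|⁻¹ * |z - x j| ≤ s⁻¹ * (B - A) := by
            apply mul_le_mul _ hzx (abs_nonneg _) (by positivity)
            exact inv_anti₀ hs0 hd
        _ = (n : ℝ) * R := by
            rw [hs, hR]; field_simp
    -- expand q via interpolation
    have heval : Polynomial.eval z q =
        ∑ i : Fin (n + 1), Polynomial.eval (x i) q *
          Polynomial.eval z (Lagrange.basis Finset.univ x i) := by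
      conv_lhs => rw [hqeq]
      rw [Lagrange.interpolate_apply, Polynomial.eval_finset_sum]
      apply Finset.sum_congr rfl
      intro i _
      rw [Polynomial.eval_mul, Polynomial.eval_C]
    rw [heval]
    calc |∑ i : Fin (n + 1), Polynomial.eval (x i) q *
          Polynomial.eval z (Lagrange.basis Finset.univ x i)|
        ≤ ∑ i : Fin (n + 1), |Polynomial.eval (x i) q *
            Polynomial.eval z (Lagrange.basis Finset.univ x i)| :=
          Finset.abs_sum_le_sum_abs _ _
      _ ≤ ∑ _i : Fin (n + 1), M * ((n : ℝ) * R) ^ n := by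
          apply Finset.sum_le_sum
          intro i _
          rw [abs_mul]
          exact mul_le_mul (hMle _ (hxmem i)) (hbasis i) (abs_nonneg _) hM0
      _ = (n + 1) * (M * ((n : ℝ) * R) ^ n) := by
          rw [Finset.sum_const, Finset.card_univ, Fintype.card_fin, nsmul_eq_mul]
          push_cast; ring
      _ = (n + 1) * (n : ℝ) ^ n * R ^ n * M := by
          rw [mul_pow]; ring
  -- conclude via ciSup_le
  have := ciSup_le (fun z : Icc A B => key (z : ℝ) z.2)
  calc (⨆ x : Icc A B, |Polynomial.eval (x : ℝ) q|)
      ≤ (n + 1) * (n : ℝ) ^ n * R ^ n * M := this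
    _ = (n + 1) * (n : ℝ) ^ n * R ^ n * M := rfl
end PolyCarleson
end
end

section
/- Lemma B (sublevel set estimate for polynomials): Fix d ≥ 2. There is a constant c(d) depending only on d such that for every nonzero real polynomial q of degree ≤ d−1, every η > 0 and every bounded interval I ⊆ ℝ with |I| > 0, the Lebesgue measure of the sublevel set satisfies |{y ∈ I : |q(y)| < η}| ≤ c(d)·(η / sup_{x∈I}|q(x)|)^{1/(d−1)}·|I|. -/
open Set MeasureTheory

noncomputable section

namespace PolyCarleson

open Polynomial Finset in

lemma interp_bound {n : ℕ} (q : Polynomial ℝ) (hq : q.natDegree ≤ n)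
    (v : Fin (n + 1) → ℝ) {δ : ℝ} (hδ : 0 < δ)
    (hsep : ∀ i j : Fin (n + 1), i ≠ j → δ ≤ |v i - v j|)
    {A B η : ℝ} (hAB : A ≤ B) (hvI : ∀ i, v i ∈ Icc A B)
    (hvq : ∀ i, |q.eval (v i)| ≤ η) (hη : 0 ≤ η)
    {x : ℝ} (hx : x ∈ Icc A B) :
    |q.eval x| ≤ (n + 1) * η * ((B - A) / δ) ^ n := by
  rcases eq_or_ne q 0 with rfl | hq0
  · simp only [eval_zero, abs_zero]
    exact mul_nonneg (mul_nonneg (by positivity) hη)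
      (pow_nonneg (div_nonneg (by linarith) hδ.le) n)
  have hinj : Set.InjOn v (Finset.univ : Finset (Fin (n + 1))) := by
    intro i _ j _ hij
    by_contra hne
    have := hsep i j hne
    rw [hij, sub_self, abs_zero] at this
    linarith
  have hdeg : q.degree < (Finset.univ : Finset (Fin (n + 1))).card := by
    rw [Finset.card_univ, Fintype.card_fin]
    exact (Polynomial.natDegree_lt_iff_degree_lt hq0).mp (Nat.lt_succ_of_le hq)
  have hinterp := Lagrange.eq_interpolate hinj hdeg
  have hbasis : ∀ i : Fin (n + 1),
      |Polynomial.eval x (Lagrange.basis Finset.univ v i)| ≤ ((B - A) / δ) ^ n := by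
    intro i
    rw [Lagrange.basis, Polynomial.eval_prod, Finset.abs_prod]
    have hcard : (Finset.univ.erase i).card = n := by
      rw [Finset.card_erase_of_mem (Finset.mem_univ i), Finset.card_univ, Fintype.card_fin]
      rfl
    calc ∏ j ∈ Finset.univ.erase i, |Polynomial.eval x (Lagrange.basisDivisor (v i) (v j))|
        ≤ ∏ _j ∈ Finset.univ.erase i, ((B - A) / δ) := by
          apply Finset.prod_le_prod (fun j _ => abs_nonneg _)
          intro j hj
          have hji : j ≠ i := (Finset.mem_erase.mp hj).1
          rw [Lagrange.basisDivisor, Polynomial.eval_mul, Polynomial.eval_C,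
            Polynomial.eval_sub, Polynomial.eval_X, Polynomial.eval_C, abs_mul, abs_inv]
          have h1 : |x - v j| ≤ B - A := by
            have hx1 := hx.1; have hx2 := hx.2
            have hv1 := (hvI j).1; have hv2 := (hvI j).2
            rw [abs_le]; constructor <;> linarith
          have h2 : δ ≤ |v i - v j| := hsep i j (Ne.symm hji)
          rw [inv_mul_eq_div]
          exact div_le_div₀ (by linarith) h1 hδ h2
      _ = ((B - A) / δ) ^ n := by rw [Finset.prod_const, hcard]
  conv_lhs => rw [hinterp]
  rw [Lagrange.interpolate_apply, Polynomial.eval_finset_sum]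
  calc |∑ i : Fin (n + 1), Polynomial.eval x (Polynomial.C (q.eval (v i)) *
          Lagrange.basis Finset.univ v i)|
      ≤ ∑ i : Fin (n + 1), |Polynomial.eval x (Polynomial.C (q.eval (v i)) *
          Lagrange.basis Finset.univ v i)| := Finset.abs_sum_le_sum_abs _ _
    _ ≤ ∑ _i : Fin (n + 1), η * ((B - A) / δ) ^ n := by
        apply Finset.sum_le_sum
        intro i _
        rw [Polynomial.eval_mul, Polynomial.eval_C, abs_mul]
        exact mul_le_mul (hvq i) (hbasis i) (abs_nonneg _) hη
    _ = (n + 1) * η * ((B - A) / δ) ^ n := by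
        rw [Finset.sum_const, Finset.card_univ, Fintype.card_fin, nsmul_eq_mul]
        push_cast; ring


lemma exists_separated_points (E : Set ℝ) (hE : MeasurableSet E) {A B : ℝ}
    (hEI : E ⊆ Icc A B) (hAB : A ≤ B) (n : ℕ)
    (hpos : 0 < (volume E).toReal) :
    ∃ v : Fin (n + 1) → ℝ, (∀ i, v i ∈ closure E) ∧
      ∀ i j : Fin (n + 1), (i : ℕ) < (j : ℕ) →
        v i + (volume E).toReal / (n + 1) ≤ v j := by
  set lam := (volume E).toReal with hlam
  have hfin : volume E ≠ ⊤ := by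
    refine ne_top_of_le_ne_top ?_ (measure_mono hEI)
    simp [Real.volume_Icc]
  have hfinx : ∀ s : Set ℝ, volume (E ∩ s) ≠ ⊤ := fun s =>
    ne_top_of_le_ne_top hfin (measure_mono inter_subset_left)
  set F : ℝ → ℝ := fun x => (volume (E ∩ Iic x)).toReal with hF
  have hFadd : ∀ x y : ℝ, x ≤ y →
      F y = F x + (volume (E ∩ Ioc x y)).toReal := by
    intro x y hxy
    have hsplit : E ∩ Iic y = (E ∩ Iic x) ∪ (E ∩ Ioc x y) := by
      rw [← inter_union_distrib_left, Iic_union_Ioc_eq_Iic hxy]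
    have hdisj : Disjoint (E ∩ Iic x) (E ∩ Ioc x y) :=
      ((Iic_disjoint_Ioc le_rfl).mono inter_subset_right inter_subset_right)
    rw [hF]
    simp only
    rw [hsplit, measure_union hdisj (hE.inter measurableSet_Ioc),
      ENNReal.toReal_add (hfinx _) (hfinx _)]
  have hFmono : Monotone F := by
    intro x y hxy
    rw [hFadd x y hxy]
    have := ENNReal.toReal_nonneg (a := volume (E ∩ Ioc x y))
    linarith
  have hLip : ∀ x y : ℝ, x ≤ y → F y - F x ≤ y - x := by
    intro x y hxy
    rw [hFadd x y hxy]
    have h1 : volume (E ∩ Ioc x y) ≤ volume (Ioc x y) := measure_mono inter_subset_right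
    have h2 : (volume (E ∩ Ioc x y)).toReal ≤ (volume (Ioc x y)).toReal :=
      ENNReal.toReal_mono (by simp [Real.volume_Ioc]) h1
    rw [Real.volume_Ioc, ENNReal.toReal_ofReal (by linarith)] at h2
    linarith
  have hFcont : Continuous F := by
    apply LipschitzWith.continuous (K := 1)
    apply LipschitzWith.of_dist_le_mul
    intro x y
    rcases le_total x y with h | h
    · have h1 := hLip x y h
      have h2 := hFmono h
      rw [Real.dist_eq, Real.dist_eq, abs_of_nonpos (by linarith), abs_of_nonpos (by linarith)]
      push_cast
      linarith
    · have h1 := hLip y x h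
      have h2 := hFmono h
      rw [Real.dist_eq, Real.dist_eq, abs_of_nonneg (by linarith), abs_of_nonneg (by linarith)]
      push_cast
      linarith
  have hFA : F A = 0 := by
    have hsub : E ∩ Iic A ⊆ {A} := by
      intro y hy
      have h1 := (hEI hy.1).1
      have h2 := hy.2
      simp only [mem_Iic] at h2
      simp [le_antisymm h2 h1]
    have : volume (E ∩ Iic A) = 0 :=
      measure_mono_null hsub Real.volume_singleton
    simp [hF, this]
  have hFB : F B = lam := by
    have : E ∩ Iic B = E := inter_eq_left.mpr fun y hy => (hEI hy).2
    rw [hF]; simp only; rw [this]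
  have hnpos : (0 : ℝ) < n + 1 := by positivity
  have hδpos : 0 < lam / (n + 1) := by positivity
  set t : Fin (n + 1) → ℝ := fun j => j * (lam / (n + 1)) with ht
  have ht_nonneg : ∀ j, 0 ≤ t j := fun j => by positivity
  have ht_lt : ∀ j, t j < lam := by
    intro j
    have hj : (j : ℝ) ≤ n := by exact_mod_cast Nat.lt_succ_iff.mp j.2
    have : t j ≤ n * (lam / (n + 1)) := by
      apply mul_le_mul_of_nonneg_right hj hδpos.le
    have hlast : (n : ℝ) * (lam / (n + 1)) < lam := by
      rw [div_eq_mul_inv]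
      have : (n : ℝ) * (lam * ((n : ℝ) + 1)⁻¹) < ((n : ℝ) + 1) * (lam * ((n : ℝ) + 1)⁻¹) := by
        apply mul_lt_mul_of_pos_right (by linarith) (by positivity)
      calc (n : ℝ) * (lam * ((n : ℝ) + 1)⁻¹) < ((n : ℝ) + 1) * (lam * ((n : ℝ) + 1)⁻¹) := this
        _ = lam := by field_simp
    linarith
  set S : Fin (n + 1) → Set ℝ := fun j => Icc A B ∩ {x | F x ≤ t j} with hS
  have hSA : ∀ j, A ∈ S j := fun j => ⟨⟨le_rfl, hAB⟩, by simp [hFA, ht_nonneg j]⟩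
  have hSbdd : ∀ j, BddAbove (S j) := fun j => ⟨B, fun x hx => hx.1.2⟩
  have hSclosed : ∀ j, IsClosed (S j) := fun j =>
    isClosed_Icc.inter (isClosed_le hFcont continuous_const)
  set v : Fin (n + 1) → ℝ := fun j => sSup (S j) with hv
  have hvS : ∀ j, v j ∈ S j := fun j => (hSclosed j).csSup_mem ⟨A, hSA j⟩ (hSbdd j)
  have hvIcc : ∀ j, v j ∈ Icc A B := fun j => (hvS j).1
  have hFv_le : ∀ j, F (v j) ≤ t j := fun j => (hvS j).2
  have hgt : ∀ j, ∀ x : ℝ, v j < x → x ≤ B → t j < F x := by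
    intro j x hvx hxB
    by_contra hcon
    push_neg at hcon
    have hxS : x ∈ S j := ⟨⟨le_trans (hvIcc j).1 hvx.le, hxB⟩, hcon⟩
    exact absurd (le_csSup (hSbdd j) hxS) (not_le.mpr hvx)
  have hvltB : ∀ j, v j < B := by
    intro j
    rcases lt_or_eq_of_le (hvIcc j).2 with h | h
    · exact h
    · exfalso
      have := hFv_le j
      rw [h, hFB] at this
      exact absurd this (not_le.mpr (ht_lt j))
  have hFv_ge : ∀ j, t j ≤ F (v j) := by
    intro j
    by_contra hcon
    push_neg at hcon
    have hopen : IsOpen {x | F x < t j} := isOpen_lt hFcont continuous_const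
    obtain ⟨δ, hδ, hball⟩ := Metric.isOpen_iff.mp hopen (v j) hcon
    set x := min (v j + δ / 2) B with hx
    have hvx : v j < x := lt_min (by linarith) (hvltB j)
    have hxB : x ≤ B := min_le_right _ _
    have hxball : x ∈ Metric.ball (v j) δ := by
      rw [Metric.mem_ball, Real.dist_eq, abs_of_nonneg (by linarith)]
      have : x ≤ v j + δ / 2 := min_le_left _ _
      linarith
    exact absurd (hball hxball) (not_lt.mpr (hgt j x hvx hxB).le)
  have hFv : ∀ j, F (v j) = t j := fun j => le_antisymm (hFv_le j) (hFv_ge j)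
  refine ⟨v, ?_, ?_⟩
  · intro j
    rw [Metric.mem_closure_iff]
    intro ε hε
    set x := min (v j + ε / 2) B with hx
    have hvx : v j < x := lt_min (by linarith) (hvltB j)
    have hxB : x ≤ B := min_le_right _ _
    have hFx : F (v j) < F x := by rw [hFv j]; exact hgt j x hvx hxB
    have hvol : 0 < (volume (E ∩ Ioc (v j) x)).toReal := by
      have := hFadd (v j) x hvx.le
      linarith
    have hne : (E ∩ Ioc (v j) x).Nonempty := by
      rcases eq_empty_or_nonempty (E ∩ Ioc (v j) x) with h | h
      · rw [h] at hvol; simp at hvol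
      · exact h
    obtain ⟨y, hyE, hyI⟩ := hne
    refine ⟨y, hyE, ?_⟩
    rw [Real.dist_eq, abs_of_nonpos (by linarith [hyI.1])]
    have hy2 : y ≤ x := hyI.2
    have : x ≤ v j + ε / 2 := min_le_left _ _
    linarith [hyI.1]
  · intro i j hij
    have hvmono : v i ≤ v j := by
      apply csSup_le_csSup (hSbdd j) ⟨A, hSA i⟩
      intro x hx
      refine ⟨hx.1, ?_⟩
      have hti : t i ≤ t j := by
        apply mul_le_mul_of_nonneg_right _ hδpos.le
        exact_mod_cast hij.le
      exact le_trans hx.2 hti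
    have hlip := hLip (v i) (v j) hvmono
    rw [hFv i, hFv j] at hlip
    have htij : t i + lam / (n + 1) ≤ t j := by
      rw [ht]
      simp only
      have : (i : ℝ) + 1 ≤ (j : ℝ) := by exact_mod_cast hij
      nlinarith [hδpos]
    linarith

/-- **Lemma B (sublevel set estimate).** For `d ≥ 2` there is `c(d) > 0` such that for
every nonzero real polynomial `q` of degree `≤ d−1`, every `η > 0` and every bounded
interval `I = [A,B]` with `|I| > 0`,
`|{y ∈ I : |q(y)| < η}| ≤ c(d)·(η / sup_{x∈I}|q(x)|)^{1/(d−1)}·|I|`. -/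
theorem lemmaB (d : ℕ) (hd : 2 ≤ d) :
    ∃ c : ℝ, 0 < c ∧
      ∀ q : Polynomial ℝ, q ≠ 0 → q.natDegree ≤ d - 1 →
        ∀ η : ℝ, 0 < η → ∀ A B : ℝ, A < B →
          volume {y ∈ Icc A B | |Polynomial.eval y q| < η} ≤
            ENNReal.ofReal
              (c * (η / ⨆ x : Icc A B, |Polynomial.eval (x : ℝ) q|) ^
                  ((1 : ℝ) / ((d : ℝ) - 1)) * (B - A)) := by
  have hdpos : (0 : ℝ) < d := by exact_mod_cast (by omega : 0 < d)
  refine ⟨(d : ℝ) ^ 2, by positivity, ?_⟩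
  intro q hq0 hqd η hη A B hAB
  set n := d - 1 with hn_def
  have hn : 1 ≤ n := by omega
  have hnd : ((n : ℕ) : ℝ) = (d : ℝ) - 1 := by
    rw [hn_def]; push_cast [Nat.cast_sub (by omega : 1 ≤ d)]; ring
  have hnd1 : ((n : ℝ) + 1) = (d : ℝ) := by rw [hnd]; ring
  set E := {y ∈ Icc A B | |Polynomial.eval y q| < η} with hE_def
  have hcont : Continuous fun y : ℝ => |Polynomial.eval y q| :=
    (Polynomial.continuous q).abs
  have hEeq : E = Icc A B ∩ {y | |Polynomial.eval y q| < η} := by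
    ext y; simp [hE_def, Set.mem_sep_iff]
  have hEmeas : MeasurableSet E := by
    rw [hEeq]
    exact measurableSet_Icc.inter (isOpen_lt hcont continuous_const).measurableSet
  have hEsub : E ⊆ Icc A B := fun y hy => hy.1
  have hEfin : volume E ≠ ⊤ := by
    refine ne_top_of_le_ne_top ?_ (measure_mono hEsub)
    simp [Real.volume_Icc]
  set lam := (volume E).toReal with hlam_def
  haveI : Nonempty (Icc A B) := (Set.nonempty_Icc.mpr hAB.le).to_subtype
  set M := ⨆ x : Icc A B, |Polynomial.eval (x : ℝ) q| with hM_def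
  have hbdd : BddAbove (Set.range fun x : Icc A B => |Polynomial.eval (x : ℝ) q|) := by
    obtain ⟨C, hC⟩ := isCompact_Icc.exists_bound_of_continuousOn
      (hcont.continuousOn (s := Icc A B))
    refine ⟨C, ?_⟩
    rintro y ⟨x, rfl⟩
    have h := hC x x.2
    rwa [Real.norm_eq_abs, abs_abs] at h
  have hM_ge : ∀ y ∈ Icc A B, |Polynomial.eval y q| ≤ M := fun y hy =>
    le_ciSup hbdd (⟨y, hy⟩ : Icc A B)
  have hMpos : 0 < M := by
    have hroots : {x : ℝ | Polynomial.IsRoot q x}.Finite := Polynomial.finite_setOf_isRoot hq0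
    obtain ⟨z, hz⟩ := ((Set.Icc_infinite hAB).diff hroots).nonempty
    have hz1 : z ∈ Icc A B := hz.1
    have hz2 : Polynomial.eval z q ≠ 0 := hz.2
    have : 0 < |Polynomial.eval z q| := abs_pos.mpr hz2
    exact lt_of_lt_of_le this (hM_ge z hz1)
  rcases eq_or_lt_of_le (ENNReal.toReal_nonneg (a := volume E)) with h0 | hlampos
  · have hE0 : volume E = 0 := by
      rcases (ENNReal.toReal_eq_zero_iff _).mp h0.symm with h | h
      · exact h
      · exact absurd h hEfin
    rw [hE0]; exact zero_le
  · obtain ⟨v, hvcl, hvsep⟩ := exists_separated_points E hEmeas hEsub hAB.le n hlampos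
    set δ := lam / ((n : ℝ) + 1) with hδ_def
    have hδpos : 0 < δ := by positivity
    have hsep' : ∀ i j : Fin (n + 1), i ≠ j → δ ≤ |v i - v j| := by
      intro i j hij
      rcases lt_trichotomy (i : ℕ) (j : ℕ) with h | h | h
      · have := hvsep i j h
        rw [abs_sub_comm]
        calc δ ≤ v j - v i := by linarith
          _ ≤ |v j - v i| := le_abs_self _
      · exact absurd (Fin.ext h) hij
      · have := hvsep j i h
        calc δ ≤ v i - v j := by linarith
          _ ≤ |v i - v j| := le_abs_self _
    have hclosed : closure E ⊆ Icc A B ∩ {y | |Polynomial.eval y q| ≤ η} := by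
      apply closure_minimal
      · intro y hy; exact ⟨hy.1, le_of_lt hy.2⟩
      · exact isClosed_Icc.inter (isClosed_le hcont continuous_const)
    have hvI : ∀ i, v i ∈ Icc A B := fun i => (hclosed (hvcl i)).1
    have hvq : ∀ i, |Polynomial.eval (v i) q| ≤ η := fun i => (hclosed (hvcl i)).2
    have hqd' : q.natDegree ≤ n := hqd
    have hM_ub : M ≤ ((n : ℝ) + 1) * η * ((B - A) / δ) ^ n := by
      apply ciSup_le
      intro x
      exact interp_bound q hqd' v hδpos hsep' hAB.le hvI hvq hη.le x.2
    have hlamne : lam ≠ 0 := ne_of_gt hlampos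
    have hnp1 : (0 : ℝ) < (n : ℝ) + 1 := by positivity
    have e1 : ((B - A) / δ) ^ n = (B - A) ^ n * ((n : ℝ) + 1) ^ n / lam ^ n := by
      rw [hδ_def, div_pow, div_pow]
      field_simp
    have key : lam ^ n * M ≤ ((n : ℝ) + 1) ^ (n + 1) * η * (B - A) ^ n := by
      have h := hM_ub
      rw [e1] at h
      have h2 : lam ^ n * M ≤ lam ^ n * (((n : ℝ) + 1) * η *
          ((B - A) ^ n * ((n : ℝ) + 1) ^ n / lam ^ n)) :=
        mul_le_mul_of_nonneg_left h (by positivity)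
      calc lam ^ n * M ≤ _ := h2
        _ = ((n : ℝ) + 1) ^ (n + 1) * η * (B - A) ^ n := by
          field_simp
          ring
    have lamn_le : lam ^ n ≤ ((n : ℝ) + 1) ^ (n + 1) * (η / M) * (B - A) ^ n := by
      have h2 : lam ^ n ≤ (((n : ℝ) + 1) ^ (n + 1) * η * (B - A) ^ n) / M := by
        rw [le_div_iff₀ hMpos]; exact key
      calc lam ^ n ≤ _ := h2
        _ = ((n : ℝ) + 1) ^ (n + 1) * (η / M) * (B - A) ^ n := by ring
    set r := η / M with hr_def
    have hr : 0 ≤ r := by positivity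
    have hBA : (0 : ℝ) ≤ B - A := by linarith
    have hn0 : (n : ℝ) ≠ 0 := by
      have : (1 : ℝ) ≤ n := by exact_mod_cast hn
      linarith
    have hlamnn : 0 ≤ lam := hlampos.le
    have h3 : ((lam ^ n : ℝ)) ^ ((1 : ℝ) / n) ≤
        (((n : ℝ) + 1) ^ (n + 1) * r * (B - A) ^ n) ^ ((1 : ℝ) / n) :=
      Real.rpow_le_rpow (by positivity) lamn_le (by positivity)
    have e2 : ∀ (a : ℝ), 0 ≤ a → ((a ^ n : ℝ)) ^ ((1 : ℝ) / n) = a := by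
      intro a ha
      rw [← Real.rpow_natCast a n, ← Real.rpow_mul ha, mul_one_div, div_self hn0,
        Real.rpow_one]
    have e3 : (((n : ℝ) + 1) ^ (n + 1) * r * (B - A) ^ n) ^ ((1 : ℝ) / n) =
        (((n : ℝ) + 1) ^ (n + 1)) ^ ((1 : ℝ) / n) * r ^ ((1 : ℝ) / n) *
          ((B - A) ^ n) ^ ((1 : ℝ) / n) := by
      rw [Real.mul_rpow (by positivity) (by positivity),
        Real.mul_rpow (by positivity) hr]
    have e5 : ((((n : ℝ) + 1) ^ (n + 1)) : ℝ) ^ ((1 : ℝ) / n) ≤ ((n : ℝ) + 1) ^ 2 := by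
      rw [← Real.rpow_natCast ((n : ℝ) + 1) (n + 1), ← Real.rpow_mul (by positivity)]
      have h1n : (1 : ℝ) ≤ (n : ℝ) := by exact_mod_cast hn
      calc ((n : ℝ) + 1) ^ (((n + 1 : ℕ) : ℝ) * ((1 : ℝ) / n)) ≤ ((n : ℝ) + 1) ^ (2 : ℝ) := by
            apply Real.rpow_le_rpow_of_exponent_le (by linarith)
            rw [mul_one_div, div_le_iff₀ (by linarith)]
            push_cast
            linarith
        _ = ((n : ℝ) + 1) ^ 2 := by
            rw [show (2 : ℝ) = ((2 : ℕ) : ℝ) by norm_num, Real.rpow_natCast]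
    have final : lam ≤ (d : ℝ) ^ 2 * r ^ ((1 : ℝ) / ((d : ℝ) - 1)) * (B - A) := by
      have h4 : lam ≤ (((n : ℝ) + 1) ^ (n + 1)) ^ ((1 : ℝ) / n) * r ^ ((1 : ℝ) / n) * (B - A) := by
        calc lam = ((lam ^ n : ℝ)) ^ ((1 : ℝ) / n) := (e2 lam hlamnn).symm
          _ ≤ (((n : ℝ) + 1) ^ (n + 1) * r * (B - A) ^ n) ^ ((1 : ℝ) / n) := h3
          _ = _ := by rw [e3, e2 (B - A) hBA]
      have h5 : (((n : ℝ) + 1) ^ (n + 1)) ^ ((1 : ℝ) / n) * r ^ ((1 : ℝ) / n) * (B - A) ≤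
          ((n : ℝ) + 1) ^ 2 * r ^ ((1 : ℝ) / n) * (B - A) := by
        apply mul_le_mul_of_nonneg_right _ hBA
        exact mul_le_mul_of_nonneg_right e5 (Real.rpow_nonneg hr _)
      have h6 : ((n : ℝ) + 1) ^ 2 * r ^ ((1 : ℝ) / n) * (B - A) =
          (d : ℝ) ^ 2 * r ^ ((1 : ℝ) / ((d : ℝ) - 1)) * (B - A) := by
        rw [hnd1, hnd]
      linarith
    calc volume E = ENNReal.ofReal lam := (ENNReal.ofReal_toReal hEfin).symm
      _ ≤ _ := ENNReal.ofReal_le_ofReal final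

end PolyCarleson
end
end
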